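/- arXiv:2301.02151 — 4 statements merged into one kernel-verified Lean document; each statement's English description precedes it below -/
import Mathlib

section
/- Let W be a symmetric positive semidefinite matrix with eigenvalues in [1/2, 1], γ ∈ [0,1), M = (1-γ)W²(I-γW²)^{-1}, L_M = I - M, and L_W = I - W. Then L_M ⪯ β^{-1} L_W W with β = (1-γ)/4. More precisely, for every eigenvalue λ ∈ [1/2,1] of W, (1-λ²)/(1-γλ²) ≤ (4/(1-γ)) · λ(1-λ). -/
open Matrix

lemma scal_aux (γ lam : ℝ) (hγ0 : 0 ≤ γ) (hγ1 : γ < 1) (h1 : 1/2 ≤ lam) (h2 : lam ≤ 1) :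
    (1 - lam ^ 2) / (1 - γ * lam ^ 2) ≤ (4 / (1 - γ)) * (lam * (1 - lam)) := by
  have hl2 : lam ^ 2 ≤ 1 := by nlinarith
  have hd : 0 < 1 - γ * lam ^ 2 := by nlinarith [mul_le_mul_of_nonneg_left hl2 hγ0]
  have hg : 0 < 1 - γ := by linarith
  rw [div_le_iff₀ hd, div_mul_eq_mul_div, div_mul_eq_mul_div, le_div_iff₀ hg]
  have key1 : 0 ≤ (1 - lam) * ((1 - γ) * (3 * lam - 1)) :=
    mul_nonneg (by linarith) (mul_nonneg hg.le (by linarith))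
  have key2 : 0 ≤ (1 - lam) * (γ * (4 * lam * ((1 - lam) * (1 + lam)))) :=
    mul_nonneg (by linarith) (mul_nonneg hγ0 (by nlinarith))
  nlinarith [key1, key2]

/-- With `W` symmetric PSD with eigenvalues in `[1/2,1]`, `γ ∈ [0,1)`,
`M = (1-γ)W²(I-γW²)⁻¹`, `L_M = I - M` and `L_W = I - W`, we have
`L_M ⪯ β⁻¹ L_W W` with `β = (1-γ)/4`; more precisely, for every eigenvalue
`λ ∈ [1/2,1]` of `W`, `(1-λ²)/(1-γλ²) ≤ (4/(1-γ))·λ(1-λ)`. -/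
theorem LM_le_beta_inv_LW_W (n : ℕ) (γ : ℝ) (hγ0 : 0 ≤ γ) (hγ1 : γ < 1)
    (W : Matrix (Fin n) (Fin n) ℝ) (hW : W.PosSemidef)
    (heig : ∀ i, hW.1.eigenvalues i ∈ Set.Icc (1/2 : ℝ) 1)
    (hinv : IsUnit ((1 : Matrix (Fin n) (Fin n) ℝ) - γ • W ^ 2).det)
    (M : Matrix (Fin n) (Fin n) ℝ)
    (hM : M = (1 - γ) • (W ^ 2 * ((1 : Matrix (Fin n) (Fin n) ℝ) - γ • W ^ 2)⁻¹)) :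
    (((4 / (1 - γ)) • (((1 : Matrix (Fin n) (Fin n) ℝ) - W) * W) -
        ((1 : Matrix (Fin n) (Fin n) ℝ) - M)).PosSemidef) ∧
      ∀ lam : ℝ, lam ∈ Set.Icc (1/2 : ℝ) 1 →
        (1 - lam ^ 2) / (1 - γ * lam ^ 2) ≤ (4 / (1 - γ)) * (lam * (1 - lam)) := by
  have hg : 0 < 1 - γ := by linarith
  refine ⟨?_, fun lam hlam => scal_aux γ lam hγ0 hγ1 hlam.1 hlam.2⟩
  set ev := hW.1.eigenvalues with hev
  set U : Matrix (Fin n) (Fin n) ℝ := (hW.1.eigenvectorUnitary : Matrix (Fin n) (Fin n) ℝ)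
    with hUdef
  have hU1 : U * star U = 1 := (Matrix.mem_unitaryGroup_iff).mp hW.1.eigenvectorUnitary.2
  have hU2 : star U * U = 1 := (Matrix.mem_unitaryGroup_iff').mp hW.1.eigenvectorUnitary.2
  set D : (Fin n → ℝ) → Matrix (Fin n) (Fin n) ℝ :=
    fun d => U * diagonal d * star U with hD
  have hmul : ∀ a b, D a * D b = D (a * b) := by
    intro a b
    simp only [hD, Matrix.mul_assoc]
    rw [← Matrix.mul_assoc (star U) U, hU2, Matrix.one_mul,
      ← Matrix.mul_assoc (diagonal a), Matrix.diagonal_mul_diagonal]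
    rfl
  have hone : D 1 = 1 := by
    simp only [hD, Pi.one_def, Matrix.diagonal_one, Matrix.mul_one, hU1]
  have hsub : ∀ a b, D a - D b = D (a - b) := by
    intro a b
    simp only [hD]
    rw [← Matrix.sub_mul, ← Matrix.mul_sub, Matrix.diagonal_sub]
    rfl
  have hsmul : ∀ (c : ℝ) a, c • D a = D (c • a) := by
    intro c a
    simp only [hD]
    rw [Matrix.diagonal_smul, mul_smul_comm, smul_mul_assoc]
  have hW_eq : W = D ev := by
    simpa [hD, hUdef, hev, Function.comp] using hW.1.spectral_theorem
  have hden : ∀ i, 0 < 1 - γ * ev i ^ 2 := by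
    intro i
    have h1 := (heig i).1; have h2 := (heig i).2
    have hl2 : ev i ^ 2 ≤ 1 := by nlinarith
    nlinarith [mul_le_mul_of_nonneg_left hl2 hγ0]
  have hW2 : W ^ 2 = D (fun i => ev i ^ 2) := by
    have hv : ev * ev = fun i => ev i ^ 2 := by funext i; simp [Pi.mul_apply, sq]
    rw [hW_eq, pow_two, hmul, hv]
  have hres : (1 : Matrix (Fin n) (Fin n) ℝ) - γ • W ^ 2 = D (fun i => 1 - γ * ev i ^ 2) := by
    have hv : (1 : Fin n → ℝ) - γ • (fun i => ev i ^ 2) = fun i => 1 - γ * ev i ^ 2 := by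
      funext i; simp
    rw [hW2, hsmul, ← hone, hsub, hv]
  have hresinv : ((1 : Matrix (Fin n) (Fin n) ℝ) - γ • W ^ 2)⁻¹
      = D (fun i => (1 - γ * ev i ^ 2)⁻¹) := by
    rw [hres]
    apply Matrix.inv_eq_right_inv
    have hv : ((fun i => 1 - γ * ev i ^ 2) * fun i => (1 - γ * ev i ^ 2)⁻¹) = 1 := by
      funext i
      simp only [Pi.mul_apply, Pi.one_apply]
      exact mul_inv_cancel₀ (hden i).ne'
    rw [hmul, hv, hone]
  set mv : Fin n → ℝ := fun i => (1 - γ) * (ev i ^ 2 * (1 - γ * ev i ^ 2)⁻¹) with hmv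
  have hM_eq : M = D mv := by
    have hv : (1 - γ) • ((fun i => ev i ^ 2) * fun i => (1 - γ * ev i ^ 2)⁻¹) = mv := by
      funext i; simp [hmv, Pi.mul_apply]
    rw [hM, hresinv, hW2, hmul, hsmul, hv]
  have h1W : (1 : Matrix (Fin n) (Fin n) ℝ) - W = D (1 - ev) := by
    rw [hW_eq, ← hsub, hone]
  have h1M : (1 : Matrix (Fin n) (Fin n) ℝ) - M = D (1 - mv) := by
    rw [hM_eq, ← hsub, hone]
  set tv : Fin n → ℝ := (4 / (1 - γ)) • ((1 - ev) * ev) - (1 - mv) with htv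
  have hT : (4 / (1 - γ)) • (((1 : Matrix (Fin n) (Fin n) ℝ) - W) * W) -
      ((1 : Matrix (Fin n) (Fin n) ℝ) - M) = D tv := by
    rw [h1W, h1M]
    rw [hW_eq]
    rw [hmul, hsmul, hsub, htv]
  rw [hT]
  have hdiagpsd : (diagonal tv).PosSemidef := by
    rw [posSemidef_diagonal_iff]
    intro i
    have h1 := (heig i).1; have h2 := (heig i).2
    have hdi := hden i
    have hkey := scal_aux γ (ev i) hγ0 hγ1 h1 h2
    have heq : (1 : ℝ) - mv i = (1 - ev i ^ 2) / (1 - γ * ev i ^ 2) := by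
      simp only [hmv]
      field_simp
      ring
    have htvi : tv i = (4 / (1 - γ)) * ((1 - ev i) * ev i) - (1 - mv i) := by
      simp [htv, Pi.mul_apply]
    rw [htvi, heq]
    nlinarith [hkey]
  simpa [hD, Matrix.star_eq_conjTranspose] using hdiagpsd.mul_mul_conjTranspose_same U
end

section
/- Let F: ℝ^{nd} → ℝ be convex and differentiable, let L_W be a symmetric positive semidefinite matrix whose kernel contains the consensus space (vectors of the form 𝟙⊗θ), and let x*_η satisfy η∇F(x*_η) + L_W x*_η = 0 for η > 0. Let x̄*_η be the projection of x*_η onto the consensus space, and let x* minimize F over the consensus space. Then D_F(x*, x*_η) ≤ D_F(x̄*_η, x*_η), where D_F(x,y) = F(x) - F(y) - ∇F(y)ᵀ(x-y). -/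
open scoped RealInnerProductSpace

/-! Since `L` is symmetric and vanishes on `S`, the fixed-point equation
`η ∇F(x*_η) = -L x*_η` makes `∇F(x*_η)` orthogonal to `S`. Both `x*` and `x̄*_η` lie in `S`,
so the linear terms of the two Bregman divergences agree and the inequality reduces to
`F(x*) ≤ F(x̄*_η)`. -/

variable {E : Type*} [NormedAddCommGroup E] [InnerProductSpace ℝ E]

theorem LinearMap.IsSymmetric.inner_eq_zero_of_smul_add_apply_eq_zero {T : E →ₗ[ℝ] E}
    (hT : T.IsSymmetric) {η : ℝ} (hη : η ≠ 0) {g x s : E} (h : η • g + T x = 0)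
    (hs : s ∈ LinearMap.ker T) : ⟪g, s⟫ = 0 := by
  have hηg : η * ⟪g, s⟫ = 0 := by
    rw [← real_inner_smul_left, eq_neg_of_add_eq_zero_left h, inner_neg_left, hT,
      LinearMap.mem_ker.mp hs, inner_zero_right, neg_zero]
  exact (mul_eq_zero.mp hηg).resolve_left hη

theorem sub_sub_inner_le_of_le_of_inner_sub_eq_zero (F : E → ℝ) {g x a b : E}
    (hF : F a ≤ F b) (hab : ⟪g, a - b⟫ = 0) :
    F a - F x - ⟪g, a - x⟫ ≤ F b - F x - ⟪g, b - x⟫ := by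
  have hlin : ⟪g, a - x⟫ = ⟪g, b - x⟫ := by
    rw [← sub_eq_zero, ← inner_sub_right, sub_sub_sub_cancel_right, hab]
  linarith

theorem bregman_fixed_point_bound_general (N : ℕ)
    (F : EuclideanSpace ℝ (Fin N) → ℝ)
    (L : EuclideanSpace ℝ (Fin N) →ₗ[ℝ] EuclideanSpace ℝ (Fin N))
    (hLsym : ∀ x y, ⟪L x, y⟫ = ⟪x, L y⟫)
    (S : Submodule ℝ (EuclideanSpace ℝ (Fin N))) (hS : S ≤ LinearMap.ker L)
    (η : ℝ) (hη : 0 < η)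
    (xs : EuclideanSpace ℝ (Fin N)) (hfix : η • gradient F xs + L xs = 0)
    (xbar : EuclideanSpace ℝ (Fin N)) (hxbar : xbar = (S.orthogonalProjection xs : EuclideanSpace ℝ (Fin N)))
    (xstar : EuclideanSpace ℝ (Fin N)) (hxstarS : xstar ∈ S)
    (hxstarMin : ∀ y ∈ S, F xstar ≤ F y) :
    F xstar - F xs - ⟪gradient F xs, xstar - xs⟫ ≤
      F xbar - F xs - ⟪gradient F xs, xbar - xs⟫ := by
  have hxbarS : xbar ∈ S := hxbar ▸ Submodule.coe_mem _
  have hperp : ⟪gradient F xs, xstar - xbar⟫ = 0 :=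
    LinearMap.IsSymmetric.inner_eq_zero_of_smul_add_apply_eq_zero hLsym hη.ne' hfix
      (hS (sub_mem hxstarS hxbarS))
  exact sub_sub_inner_le_of_le_of_inner_sub_eq_zero F (hxstarMin xbar hxbarS) hperp

/-- Bregman comparison at the D-GD fixed point: `F` convex differentiable on
`ℝ^{nd}`, `L_W` a symmetric PSD operator whose kernel contains the consensus
space `S`, and `x*_η` a fixed point `η∇F(x*_η) + L_W x*_η = 0` with `η > 0`.
If `x̄*_η` is the orthogonal projection of `x*_η` onto `S` and `x*` minimizes `F`
over `S`, then `D_F(x*, x*_η) ≤ D_F(x̄*_η, x*_η)`. -/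
theorem bregman_fixed_point_bound (N : ℕ)
    (F : EuclideanSpace ℝ (Fin N) → ℝ)
    (hFconv : ConvexOn ℝ Set.univ F) (hFdiff : Differentiable ℝ F)
    (L : EuclideanSpace ℝ (Fin N) →ₗ[ℝ] EuclideanSpace ℝ (Fin N))
    (hLsym : ∀ x y, ⟪L x, y⟫ = ⟪x, L y⟫) (hLpsd : ∀ x, 0 ≤ ⟪L x, x⟫)
    (S : Submodule ℝ (EuclideanSpace ℝ (Fin N))) (hS : S ≤ LinearMap.ker L)
    (η : ℝ) (hη : 0 < η)
    (xs : EuclideanSpace ℝ (Fin N)) (hfix : η • gradient F xs + L xs = 0)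
    (xbar : EuclideanSpace ℝ (Fin N)) (hxbar : xbar = (S.orthogonalProjection xs : EuclideanSpace ℝ (Fin N)))
    (xstar : EuclideanSpace ℝ (Fin N)) (hxstarS : xstar ∈ S)
    (hxstarMin : ∀ y ∈ S, F xstar ≤ F y) :
    F xstar - F xs - ⟪gradient F xs, xstar - xs⟫ ≤
      F xbar - F xs - ⟪gradient F xs, xbar - xs⟫ :=
  bregman_fixed_point_bound_general N F L hLsym S hS η hη xs hfix xbar hxbar xstar hxstarS hxstarMin
end

section
/- Under the setting of the previous statement with F additionally μ-strongly convex (μ > 0) and L-smooth, the fixed point satisfies ‖x*_η - x*‖² ≤ (1 + L/μ)·‖x̄*_η - x*_η‖² = η²(1 + L/μ)·‖L_W† ∇F(x*_η)‖², where L_W† denotes the Moore–Penrose pseudoinverse of L_W. -/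
/-!
The fixed-point equation gives `∇F(x*_η) = L_W (-η⁻¹ x*_η)`, a vector in the range of the
symmetric matrix `L_W`, hence orthogonal to the consensus space `ker L_W`. Comparing the
strong-convexity lower bound at `x*` with the smoothness upper bound at `x̄*_η`, both expanded
around `x*_η`, the linear terms cancel and minimality of `x*` gives
`μ ‖x* - x*_η‖² ≤ L ‖x̄*_η - x*_η‖²`.

For the identity: `L_W L_W†` and `L_W† L_W` are diagonal in the same eigenbasis, so they
coincide and `x ↦ x - L_W L_W† x` is the orthogonal projection onto `ker L_W`. Hence
`x̄*_η - x*_η = -L_W† L_W x*_η = η L_W† ∇F(x*_η)`.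
-/

open scoped RealInnerProductSpace

/-- Moore–Penrose pseudoinverse of a real symmetric matrix, via its spectral
decomposition (inverting the nonzero eigenvalues; recall `(0:ℝ)⁻¹ = 0`). -/
noncomputable def symmPinv {N : ℕ} (A : Matrix (Fin N) (Fin N) ℝ)
    (hA : A.IsHermitian) : Matrix (Fin N) (Fin N) ℝ :=
  (hA.eigenvectorUnitary : Matrix (Fin N) (Fin N) ℝ) *
    Matrix.diagonal (fun i => (hA.eigenvalues i)⁻¹) *
    (star (hA.eigenvectorUnitary : Matrix (Fin N) (Fin N) ℝ))

open Matrix Unitary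

section Pseudoinverse

variable {N : ℕ} {A : Matrix (Fin N) (Fin N) ℝ} (hA : A.IsHermitian)

theorem Matrix.IsHermitian.conjStarAlgAut_diagonal_eigenvalues :
    conjStarAlgAut ℝ _ hA.eigenvectorUnitary (diagonal hA.eigenvalues) = A :=
  hA.spectral_theorem.symm

theorem symmPinv_eq_conjStarAlgAut :
    symmPinv A hA = conjStarAlgAut ℝ _ hA.eigenvectorUnitary
      (diagonal fun i => (hA.eigenvalues i)⁻¹) :=
  rfl

theorem mul_symmPinv_mul_self : A * symmPinv A hA * A = A := by
  calc A * symmPinv A hA * A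
      = conjStarAlgAut ℝ _ hA.eigenvectorUnitary (diagonal hA.eigenvalues *
          diagonal (fun i => (hA.eigenvalues i)⁻¹) * diagonal hA.eigenvalues) := by
        rw [map_mul, map_mul, hA.conjStarAlgAut_diagonal_eigenvalues, symmPinv_eq_conjStarAlgAut]
    _ = A := by
        simp only [diagonal_mul_diagonal, mul_inv_mul_cancel,
          hA.conjStarAlgAut_diagonal_eigenvalues]

theorem commute_symmPinv_self : Commute (symmPinv A hA) A := by
  have h := (commute_diagonal (fun i => (hA.eigenvalues i)⁻¹) hA.eigenvalues).map
    (conjStarAlgAut ℝ _ hA.eigenvectorUnitary)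
  rwa [hA.conjStarAlgAut_diagonal_eigenvalues] at h

theorem toEuclideanLin_mul_symmPinv_mul_self :
    toEuclideanLin A * toEuclideanLin (symmPinv A hA) * toEuclideanLin A = toEuclideanLin A := by
  have h := congrArg (toLpLinAlgEquiv (R := ℝ) (n := Fin N) 2) (mul_symmPinv_mul_self hA)
  rwa [map_mul, map_mul] at h

theorem commute_toEuclideanLin_symmPinv :
    Commute (toEuclideanLin (symmPinv A hA)) (toEuclideanLin A) :=
  (commute_symmPinv_self hA).map (toLpLinAlgEquiv 2)

end Pseudoinverse

section Projection

variable {𝕜 E : Type*} [RCLike 𝕜] [NormedAddCommGroup E] [InnerProductSpace 𝕜 E]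
  {T : Module.End 𝕜 E}

theorem LinearMap.IsSymmetric.inner_map_eq_zero_of_mem_ker (hT : T.IsSymmetric) (u : E) {w : E}
    (hw : w ∈ LinearMap.ker T) : inner 𝕜 (T u) w = 0 := by
  rw [hT, LinearMap.mem_ker.mp hw, inner_zero_right]

theorem LinearMap.IsSymmetric.starProjection_ker_eq_sub (hT : T.IsSymmetric)
    {P : Module.End 𝕜 E} (hTPT : T * P * T = T) (hPT : Commute P T)
    [(LinearMap.ker T).HasOrthogonalProjection] (x : E) :
    (LinearMap.ker T).starProjection x = x - T (P x) := by
  refine Submodule.eq_starProjection_of_mem_of_inner_eq_zero ?_ fun w hw => ?_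
  · have hTTP : T (T (P x)) = T x := by
      rw [← Module.End.mul_apply, ← Module.End.mul_apply, mul_assoc, ← hPT.eq, ← mul_assoc,
        hTPT]
    rw [LinearMap.mem_ker, map_sub, hTTP, sub_self]
  · rw [sub_sub_cancel]
    exact hT.inner_map_eq_zero_of_mem_ker _ hw

end Projection

theorem mul_sq_norm_sub_le_of_inner_eq_zero {E : Type*} [NormedAddCommGroup E]
    [InnerProductSpace ℝ E] {F : E → ℝ} {μ L : ℝ} {x g y z : E}
    (hlower : F x + ⟪g, y - x⟫ + μ / 2 * ‖y - x‖ ^ 2 ≤ F y)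
    (hupper : F z ≤ F x + ⟪g, z - x⟫ + L / 2 * ‖z - x‖ ^ 2)
    (hyz : F y ≤ F z) (horth : ⟪g, y - z⟫ = 0) :
    μ * ‖y - x‖ ^ 2 ≤ L * ‖z - x‖ ^ 2 := by
  have hsplit : ⟪g, y - x⟫ = ⟪g, y - z⟫ + ⟪g, z - x⟫ := by
    rw [← inner_add_right, sub_add_sub_cancel]
  linarith

theorem fixed_point_distance_to_optimum_general (N : ℕ)
    (F : EuclideanSpace ℝ (Fin N) → ℝ)
    (μ Lsm : ℝ) (hμ : 0 < μ)
    (hstrong : ∀ x y, F x + ⟪gradient F x, y - x⟫ + μ / 2 * ‖y - x‖ ^ 2 ≤ F y)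
    (hsmooth : ∀ x y, F y ≤ F x + ⟪gradient F x, y - x⟫ + Lsm / 2 * ‖y - x‖ ^ 2)
    (Lw : Matrix (Fin N) (Fin N) ℝ) (hLw : Lw.PosSemidef)
    (S : Submodule ℝ (EuclideanSpace ℝ (Fin N)))
    (hS : ∀ v : EuclideanSpace ℝ (Fin N), v ∈ S ↔ Lw.mulVec v = 0)
    (η : ℝ) (hη : 0 < η)
    (xs : EuclideanSpace ℝ (Fin N))
    (hfix : ∀ i, η * gradient F xs i + Lw.mulVec xs i = 0)
    (xbar : EuclideanSpace ℝ (Fin N))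
    (hxbar : xbar = (S.orthogonalProjection xs : EuclideanSpace ℝ (Fin N)))
    (xstar : EuclideanSpace ℝ (Fin N)) (hxstarS : xstar ∈ S)
    (hxstarMin : ∀ y ∈ S, F xstar ≤ F y) :
    ‖xs - xstar‖ ^ 2 ≤ (1 + Lsm / μ) * ‖xbar - xs‖ ^ 2 ∧
      ‖xbar - xs‖ ^ 2 =
        η ^ 2 * ‖(EuclideanSpace.equiv (Fin N) ℝ).symm
          ((symmPinv Lw hLw.1).mulVec (fun i => gradient F xs i))‖ ^ 2 := by
  set T := toEuclideanLin Lw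
  set P := toEuclideanLin (symmPinv Lw hLw.1)
  have hT : T.IsSymmetric := isSymmetric_toEuclideanLin_iff.mpr hLw.1
  obtain rfl : S = LinearMap.ker T := by
    ext v
    rw [hS, LinearMap.mem_ker, toLpLin_apply, WithLp.toLp_eq_zero]
  have hgrad : η • gradient F xs = -T xs := by
    ext i
    simp only [PiLp.smul_apply, PiLp.neg_apply, smul_eq_mul, T, toLpLin_apply]
    linarith [hfix i]
  have hPT := commute_toEuclideanLin_symmPinv hLw.1
  have hdiff : xbar - xs = η • P (gradient F xs) := by
    rw [hxbar, ← Submodule.starProjection_apply,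
      hT.starProjection_ker_eq_sub (toEuclideanLin_mul_symmPinv_mul_self hLw.1) hPT, ← map_smul,
      hgrad, map_neg, ← Module.End.mul_apply P T, hPT.eq, Module.End.mul_apply]
    abel
  refine ⟨?_, by rw [hdiff, norm_smul, mul_pow, Real.norm_eq_abs, sq_abs]; rfl⟩
  have hgrad_range : gradient F xs = T (-η⁻¹ • xs) := by
    rw [map_smul, neg_smul, ← smul_neg, ← hgrad, smul_smul, inv_mul_cancel₀ hη.ne', one_smul]
  have hxbarS : xbar ∈ LinearMap.ker T := hxbar ▸ Submodule.coe_mem _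
  have horth : ⟪gradient F xs, xstar - xbar⟫ = 0 := by
    rw [hgrad_range]
    exact hT.inner_map_eq_zero_of_mem_ker _ (Submodule.sub_mem _ hxstarS hxbarS)
  have key := mul_sq_norm_sub_le_of_inner_eq_zero (hstrong xs xstar) (hsmooth xs xbar)
    (hxstarMin xbar hxbarS) horth
  have hquot : ‖xstar - xs‖ ^ 2 ≤ Lsm / μ * ‖xbar - xs‖ ^ 2 := by
    rwa [div_mul_eq_mul_div, le_div_iff₀' hμ]
  rw [norm_sub_rev]
  linarith [sq_nonneg ‖xbar - xs‖]

/-- Distance of the D-GD fixed point to the true optimum: with `F` `μ`-strongly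
convex and `Lsm`-smooth, `L_W` symmetric PSD with kernel the consensus space `S`,
and `x*_η` the fixed point `η∇F(x*_η) + L_W x*_η = 0`,
`‖x*_η - x*‖² ≤ (1+Lsm/μ)‖x̄*_η - x*_η‖² = η²(1+Lsm/μ)‖L_W†∇F(x*_η)‖²`. -/
theorem fixed_point_distance_to_optimum (N : ℕ)
    (F : EuclideanSpace ℝ (Fin N) → ℝ) (hFdiff : Differentiable ℝ F)
    (μ Lsm : ℝ) (hμ : 0 < μ) (hLsm : 0 < Lsm)
    (hstrong : ∀ x y, F x + ⟪gradient F x, y - x⟫ + μ / 2 * ‖y - x‖ ^ 2 ≤ F y)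
    (hsmooth : ∀ x y, F y ≤ F x + ⟪gradient F x, y - x⟫ + Lsm / 2 * ‖y - x‖ ^ 2)
    (Lw : Matrix (Fin N) (Fin N) ℝ) (hLw : Lw.PosSemidef)
    (S : Submodule ℝ (EuclideanSpace ℝ (Fin N)))
    (hS : ∀ v : EuclideanSpace ℝ (Fin N), v ∈ S ↔ Lw.mulVec v = 0)
    (η : ℝ) (hη : 0 < η)
    (xs : EuclideanSpace ℝ (Fin N))
    (hfix : ∀ i, η * gradient F xs i + Lw.mulVec xs i = 0)
    (xbar : EuclideanSpace ℝ (Fin N))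
    (hxbar : xbar = (S.orthogonalProjection xs : EuclideanSpace ℝ (Fin N)))
    (xstar : EuclideanSpace ℝ (Fin N)) (hxstarS : xstar ∈ S)
    (hxstarMin : ∀ y ∈ S, F xstar ≤ F y) :
    ‖xs - xstar‖ ^ 2 ≤ (1 + Lsm / μ) * ‖xbar - xs‖ ^ 2 ∧
      ‖xbar - xs‖ ^ 2 =
        η ^ 2 * ‖(EuclideanSpace.equiv (Fin N) ℝ).symm
          ((symmPinv Lw hLw.1).mulVec (fun i => gradient F xs i))‖ ^ 2 :=
  fixed_point_distance_to_optimum_general N F μ Lsm hμ hstrong hsmooth Lw hLw S hS η hη xs hfix xbar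
    hxbar xstar hxstarS hxstarMin
end

section
/- Let W be symmetric doubly stochastic with eigenvalues λ_i and let γ ∈ [0,1). The stationary variance of the process z^{t+1} = W(√γ z^t + ξ^t) with ξ^t ~ N(0, I_n) i.i.d., summed over coordinates, equals ∑_{i=1}^n λ_i²/(1 - γλ_i²); while for the process y^{t+1} = √γ y^t + ξ^t it equals n/(1-γ). Consequently their ratio equals n_W(γ) = (1/(1-γ)) / ((1/n)∑_i λ_i²/(1-γλ_i²)). -/
open Matrix

lemma trace_pow_eq_sum_eigenvalues {n : ℕ} (W : Matrix (Fin n) (Fin n) ℝ)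
    (hW : W.IsHermitian) (m : ℕ) :
    (W ^ m).trace = ∑ i, hW.eigenvalues i ^ m := by
  set U : Matrix (Fin n) (Fin n) ℝ := (hW.eigenvectorUnitary : Matrix (Fin n) (Fin n) ℝ)
  have hU : U * star U = 1 := (Matrix.mem_unitaryGroup_iff).mp hW.eigenvectorUnitary.2
  have hU' : star U * U = 1 := (Matrix.mem_unitaryGroup_iff').mp hW.eigenvectorUnitary.2
  set D : Matrix (Fin n) (Fin n) ℝ := Matrix.diagonal hW.eigenvalues
  have hspec : W = U * D * star U := by
    have := hW.spectral_theorem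
    simpa [D, U] using this
  have hpow : ∀ m : ℕ, W ^ m = U * D ^ m * star U := by
    intro m
    induction m with
    | zero => simpa using hU.symm
    | succ k ih =>
      rw [pow_succ, ih, hspec, pow_succ]
      simp only [Matrix.mul_assoc]
      rw [← Matrix.mul_assoc (star U) U (D * star U), hU', Matrix.one_mul]
  rw [hpow, Matrix.trace_mul_cycle, hU', Matrix.one_mul]
  simp [D, Matrix.diagonal_pow, Matrix.trace_diagonal]

/-- Random-walk characterization of the effective number of neighbors: for a
symmetric doubly stochastic `W` with eigenvalues `λᵢ ∈ [-1,1]` and `γ ∈ [0,1)`,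
the stationary variance (summed over coordinates) of `z^{t+1} = W(√γ z^t + ξ^t)`
equals `tr ∑_k γ^k W^{2(k+1)} = ∑ᵢ λᵢ²/(1-γλᵢ²)`, while for
`y^{t+1} = √γ y^t + ξ^t` it equals `n/(1-γ)`; their ratio is `n_W(γ)`. -/
theorem random_walk_variance_ratio (n : ℕ) (hn : 0 < n) (γ : ℝ)
    (hγ0 : 0 ≤ γ) (hγ1 : γ < 1)
    (W : Matrix (Fin n) (Fin n) ℝ) (hW : W.IsHermitian)
    (hrow : ∀ i, ∑ j, W i j = 1) (hcol : ∀ j, ∑ i, W i j = 1)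
    (hnonneg : ∀ i j, 0 ≤ W i j)
    (heig : ∀ i, hW.eigenvalues i ∈ Set.Icc (-1 : ℝ) 1)
    (hcontr : ∀ i, γ * (hW.eigenvalues i) ^ 2 < 1) :
    (∑' k : ℕ, γ ^ k * (W ^ (2 * (k + 1))).trace) =
        ∑ i, (hW.eigenvalues i) ^ 2 / (1 - γ * (hW.eigenvalues i) ^ 2) ∧
      (∑' k : ℕ, γ ^ k * (n : ℝ)) = (n : ℝ) / (1 - γ) ∧
      (∑' k : ℕ, γ ^ k * (n : ℝ)) / (∑' k : ℕ, γ ^ k * (W ^ (2 * (k + 1))).trace) =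
        (1 / (1 - γ)) /
          ((1 / (n : ℝ)) * ∑ i, (hW.eigenvalues i) ^ 2 / (1 - γ * (hW.eigenvalues i) ^ 2)) := by
  set lam := hW.eigenvalues with hlam
  have hr0 : ∀ i, (0:ℝ) ≤ γ * lam i ^ 2 := fun i => by positivity
  have hterm : ∀ i k, γ ^ k * lam i ^ (2 * (k + 1)) = lam i ^ 2 * (γ * lam i ^ 2) ^ k := by
    intro i k
    rw [mul_pow, ← pow_mul]
    ring
  have hsummable : ∀ i : Fin n, Summable (fun k : ℕ => γ ^ k * lam i ^ (2 * (k + 1))) := by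
    intro i
    simp only [hterm]
    exact (summable_geometric_of_lt_one (hr0 i) (hcontr i)).mul_left _
  have h1 : (∑' k : ℕ, γ ^ k * (W ^ (2 * (k + 1))).trace) =
      ∑ i, lam i ^ 2 / (1 - γ * lam i ^ 2) := by
    have : (fun k : ℕ => γ ^ k * (W ^ (2 * (k + 1))).trace) =
        fun k : ℕ => ∑ i, γ ^ k * lam i ^ (2 * (k + 1)) := by
      funext k
      rw [trace_pow_eq_sum_eigenvalues W hW, Finset.mul_sum]
    rw [this, Summable.tsum_finsetSum (fun i _ => hsummable i)]
    refine Finset.sum_congr rfl fun i _ => ?_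
    simp only [hterm]
    rw [tsum_mul_left, tsum_geometric_of_lt_one (hr0 i) (hcontr i), div_eq_mul_inv]
  have h2 : (∑' k : ℕ, γ ^ k * (n : ℝ)) = (n : ℝ) / (1 - γ) := by
    rw [tsum_mul_right, tsum_geometric_of_lt_one hγ0 hγ1, div_eq_mul_inv, mul_comm]
  refine ⟨h1, h2, ?_⟩
  rw [h1, h2]
  have hnn : (0:ℝ) < n := by exact_mod_cast hn
  have hn' : (n:ℝ) ≠ 0 := ne_of_gt hnn
  simp only [div_eq_mul_inv, mul_inv, one_mul, one_div, inv_inv]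
  ring
end
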